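/- arXiv:2112.15210 — 2 statements merged into one kernel-verified Lean document; each statement's English description precedes it below -/
import Mathlib

section
/- Let n be a positive integer, let X be a subset of {(b,d) ∈ ℝ² : b < d}, let p ∈ ℝ_{≥1} ∪ {∞}, and let D ∈ PD_n(X). Set ε_D := min_{z ∈ D} ‖z − π(z)‖_∞; then ε_D > 0, and for every ε with 0 < ε ≤ ε_D and every D' ∈ PD_n(X), if W_d^p(D,D') < ε then W^p(D,D') < ε. -/
open scoped BigOperators

/-- The sup-norm on `ℝ²`. -/
noncomputable def supNorm2 (x : ℝ × ℝ) : ℝ := max |x.1| |x.2|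

/-- The orthogonal projection of a point of `ℝ²` onto the diagonal `Δ = {(t,t)}`. -/
noncomputable def diagProj (x : ℝ × ℝ) : ℝ × ℝ := ((x.1 + x.2) / 2, (x.1 + x.2) / 2)

/-- The `p`-Wasserstein distance between two persistence diagrams (finite sets of points
of `ℝ²`): the minimum over all bijections `σ : D → D'` of the `p`-norm of the cost vector
`c(σ) = (‖z - σ(z)‖_∞)_{z ∈ D}`. -/
noncomputable def Wp (p : ℝ) (D D' : Finset (ℝ × ℝ)) : ℝ :=
  ⨅ e : {x // x ∈ D} ≃ {y // y ∈ D'},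
    (∑ x : {x // x ∈ D}, supNorm2 ((x : ℝ × ℝ) - ((e x : ℝ × ℝ))) ^ p) ^ (1 / p)

/-- The `∞`-Wasserstein (Hausdorff) distance. -/
noncomputable def Winf (D D' : Finset (ℝ × ℝ)) : ℝ :=
  ⨅ e : {x // x ∈ D} ≃ {y // y ∈ D'},
    ⨆ x : {x // x ∈ D}, supNorm2 ((x : ℝ × ℝ) - ((e x : ℝ × ℝ)))

/-- The type of partial matchings `(σ, I, I') : D → D'`: subsets `I ⊆ D`, `I' ⊆ D'`
together with a bijection `σ : I → I'`. -/
def PartialMatching (D D' : Finset (ℝ × ℝ)) : Type :=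
  Σ (I : {I : Finset (ℝ × ℝ) // I ⊆ D}) (I' : {I' : Finset (ℝ × ℝ) // I' ⊆ D'}),
    ({x // x ∈ I.1} ≃ {y // y ∈ I'.1})

/-- The diagonal-`p`-Wasserstein distance: the minimum over all partial matchings
`(σ, I, I') : D → D'` of the `p`-norm of the cost vector `c(σ, I, I')`, whose entries are
`‖z - σ(z)‖_∞` for matched points `z ∈ I`, and `‖z - π(z)‖_∞` for unmatched points of `D`
and `D'` (with `π` the projection onto the diagonal). -/
noncomputable def WdP (p : ℝ) (D D' : Finset (ℝ × ℝ)) : ℝ :=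
  ⨅ m : PartialMatching D D',
    ((∑ x : {x // x ∈ m.1.1}, supNorm2 ((x : ℝ × ℝ) - ((m.2.2 x : ℝ × ℝ))) ^ p) +
     (∑ x ∈ D \ m.1.1, supNorm2 (x - diagProj x) ^ p) +
     (∑ y ∈ D' \ m.2.1.1, supNorm2 (y - diagProj y) ^ p)) ^ (1 / p)

/-- The diagonal-`∞`-Wasserstein (bottleneck) distance: the minimum over all partial
matchings of the `∞`-norm of the cost vector `c(σ, I, I')`. -/
noncomputable def WdInf (D D' : Finset (ℝ × ℝ)) : ℝ :=
  ⨅ m : PartialMatching D D',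
    max (⨆ x : {x // x ∈ m.1.1}, supNorm2 ((x : ℝ × ℝ) - ((m.2.2 x : ℝ × ℝ))))
      (max (⨆ x : {x : ℝ × ℝ // x ∈ D \ m.1.1}, supNorm2 ((x : ℝ × ℝ) - diagProj x))
           (⨆ y : {y : ℝ × ℝ // y ∈ D' \ m.2.1.1}, supNorm2 ((y : ℝ × ℝ) - diagProj y)))

lemma supNorm2_nonneg (x : ℝ × ℝ) : 0 ≤ supNorm2 x :=
  le_max_of_le_left (abs_nonneg _)

instance partialMatching_nonempty (D D' : Finset (ℝ × ℝ)) :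
    Nonempty (PartialMatching D D') :=
  ⟨⟨⟨∅, Finset.empty_subset D⟩, ⟨∅, Finset.empty_subset D'⟩,
    Equiv.equivOfIsEmpty _ _⟩⟩

/-- For `D ∈ PD_n(X)` with `ε_D := min_{z ∈ D} ‖z − π(z)‖_∞`, we have `ε_D > 0`, and for
every `0 < ε ≤ ε_D`, every `p ∈ ℝ_{≥1} ∪ {∞}`, and every `D' ∈ PD_n(X)`:
if `W_d^p(D,D') < ε` then `W^p(D,D') < ε`. -/
theorem diagonal_wasserstein_lt_implies_wasserstein_lt (n : ℕ) (hn : 0 < n)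
    (X : Set (ℝ × ℝ)) (hX : X ⊆ {x : ℝ × ℝ | x.1 < x.2})
    (D : Finset (ℝ × ℝ)) (hD : ↑D ⊆ X) (hDcard : D.card = n) (hDne : D.Nonempty) :
    0 < D.inf' hDne (fun z => supNorm2 (z - diagProj z)) ∧
    ∀ ε : ℝ, 0 < ε → ε ≤ D.inf' hDne (fun z => supNorm2 (z - diagProj z)) →
      ∀ D' : Finset (ℝ × ℝ), ↑D' ⊆ X → D'.card = n →
        (∀ p : ℝ, 1 ≤ p → WdP p D D' < ε → Wp p D D' < ε) ∧
        (WdInf D D' < ε → Winf D D' < ε) := by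
  have hpos : ∀ z ∈ D, 0 < supNorm2 (z - diagProj z) := by
    intro z hz
    have h1 : z.1 < z.2 := hX (hD hz)
    have h2 : 0 < |(z - diagProj z).2| := by
      have : (z - diagProj z).2 = (z.2 - z.1) / 2 := by
        simp [diagProj]; ring
      rw [this, abs_pos]
      intro h; linarith
    exact lt_of_lt_of_le h2 (le_max_right _ _)
  refine ⟨(Finset.lt_inf'_iff hDne).mpr hpos, ?_⟩
  intro ε hε hεD D' hD' hcard'
  have hεz : ∀ z ∈ D, ε ≤ supNorm2 (z - diagProj z) := fun z hz =>
    hεD.trans (Finset.inf'_le _ hz)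
  constructor
  · -- finite p case
    intro p hp h
    have hp0 : (0 : ℝ) < p := lt_of_lt_of_le one_pos hp
    obtain ⟨⟨⟨I, hI⟩, ⟨I', hI'⟩, σ⟩, hm⟩ := exists_lt_of_ciInf_lt h
    have hID : I = D := by
      by_contra hne
      have hzne : (D \ I).Nonempty :=
        Finset.sdiff_nonempty.mpr (fun hsub => hne (Finset.Subset.antisymm hI hsub))
      obtain ⟨z, hzmem⟩ := hzne
      have hzD : z ∈ D := (Finset.mem_sdiff.mp hzmem).1
      have hterm : ε ^ p ≤ supNorm2 (z - diagProj z) ^ p :=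
        Real.rpow_le_rpow hε.le (hεz z hzD) hp0.le
      have hsum2 : ε ^ p ≤ ∑ x ∈ D \ I, supNorm2 (x - diagProj x) ^ p :=
        hterm.trans (Finset.single_le_sum
          (f := fun x => supNorm2 (x - diagProj x) ^ p)
          (fun i _ => Real.rpow_nonneg (supNorm2_nonneg _) p) hzmem)
      have hA : (0 : ℝ) ≤ ∑ x : {x // x ∈ I},
          supNorm2 ((x : ℝ × ℝ) - ((σ x : ℝ × ℝ))) ^ p :=
        Finset.sum_nonneg fun i _ => Real.rpow_nonneg (supNorm2_nonneg _) p
      have hC : (0 : ℝ) ≤ ∑ y ∈ D' \ I', supNorm2 (y - diagProj y) ^ p :=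
        Finset.sum_nonneg fun i _ => Real.rpow_nonneg (supNorm2_nonneg _) p
      have hS : ε ^ p ≤ (∑ x : {x // x ∈ I},
          supNorm2 ((x : ℝ × ℝ) - ((σ x : ℝ × ℝ))) ^ p) +
          (∑ x ∈ D \ I, supNorm2 (x - diagProj x) ^ p) +
          (∑ y ∈ D' \ I', supNorm2 (y - diagProj y) ^ p) := by linarith
      have hfinal : ε ≤ ((∑ x : {x // x ∈ I},
          supNorm2 ((x : ℝ × ℝ) - ((σ x : ℝ × ℝ))) ^ p) +
          (∑ x ∈ D \ I, supNorm2 (x - diagProj x) ^ p) +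
          (∑ y ∈ D' \ I', supNorm2 (y - diagProj y) ^ p)) ^ (1 / p) := by
        calc ε = (ε ^ p) ^ (1 / p) := by
              rw [← Real.rpow_mul hε.le, mul_one_div_cancel hp0.ne', Real.rpow_one]
          _ ≤ _ := Real.rpow_le_rpow (Real.rpow_nonneg hε.le p) hS
              (by positivity)
      exact absurd hm (not_lt.mpr hfinal)
    subst hID
    have hcards : D'.card ≤ I'.card := by
      have hc := Fintype.card_congr σ
      simp only [Fintype.card_coe] at hc
      omega
    have hI'D' : I' = D' := Finset.eq_of_subset_of_card_le hI' hcards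
    subst hI'D'
    refine lt_of_le_of_lt (ciInf_le ⟨0, ?_⟩ σ) ?_
    · rintro _ ⟨e, rfl⟩
      exact Real.rpow_nonneg (Finset.sum_nonneg fun i _ =>
        Real.rpow_nonneg (supNorm2_nonneg _) p) _
    · simpa [Finset.sdiff_self] using hm
  · -- infinity case
    intro h
    obtain ⟨⟨⟨I, hI⟩, ⟨I', hI'⟩, σ⟩, hm⟩ := exists_lt_of_ciInf_lt h
    have hID : I = D := by
      by_contra hne
      have hzne : (D \ I).Nonempty :=
        Finset.sdiff_nonempty.mpr (fun hsub => hne (Finset.Subset.antisymm hI hsub))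
      obtain ⟨z, hzmem⟩ := hzne
      have hzD : z ∈ D := (Finset.mem_sdiff.mp hzmem).1
      have hsup : ε ≤ ⨆ x : {x : ℝ × ℝ // x ∈ D \ I},
          supNorm2 ((x : ℝ × ℝ) - diagProj (x : ℝ × ℝ)) :=
        (hεz z hzD).trans (le_ciSup
          (f := fun x : {x : ℝ × ℝ // x ∈ D \ I} =>
            supNorm2 ((x : ℝ × ℝ) - diagProj (x : ℝ × ℝ)))
          (Set.Finite.bddAbove (Set.finite_range _)) ⟨z, hzmem⟩)
      have : ε ≤ max (⨆ x : {x // x ∈ I},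
          supNorm2 ((x : ℝ × ℝ) - ((σ x : ℝ × ℝ))))
          (max (⨆ x : {x : ℝ × ℝ // x ∈ D \ I},
            supNorm2 ((x : ℝ × ℝ) - diagProj (x : ℝ × ℝ)))
          (⨆ y : {y : ℝ × ℝ // y ∈ D' \ I'},
            supNorm2 ((y : ℝ × ℝ) - diagProj (y : ℝ × ℝ)))) :=
        hsup.trans (le_max_of_le_right (le_max_left _ _))
      exact absurd hm (not_lt.mpr this)
    subst hID
    have hcards : D'.card ≤ I'.card := by
      have hc := Fintype.card_congr σ
      simp only [Fintype.card_coe] at hc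
      omega
    have hI'D' : I' = D' := Finset.eq_of_subset_of_card_le hI' hcards
    subst hI'D'
    refine lt_of_le_of_lt ((ciInf_le ⟨0, ?_⟩ σ).trans (le_max_left _ _)) hm
    rintro _ ⟨e, rfl⟩
    exact Real.iSup_nonneg fun i => supNorm2_nonneg _
end

section
/- Let n be a positive integer, let X be a subset of {(b,d) ∈ ℝ² : b < d}, and let p ∈ ℝ_{≥1} ∪ {∞}. Then the topologies induced on PD_n(X) by W^p and by W_d^p coincide; equivalently, for every D ∈ PD_n(X) and every ε > 0 there exists δ > 0 such that {D' : W_d^p(D,D') < δ} ⊆ {D' : W^p(D,D') < ε}, and conversely for every ε > 0 there exists δ > 0 such that {D' : W^p(D,D') < δ} ⊆ {D' : W_d^p(D,D') < ε}. -/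
open scoped BigOperators

lemma supNorm2_diag_pos {z : ℝ × ℝ} (h : z.1 < z.2) : 0 < supNorm2 (z - diagProj z) := by
  have h2 : (z - diagProj z).2 = (z.2 - z.1) / 2 := by
    simp [diagProj]; ring
  calc (0:ℝ) < (z.2 - z.1) / 2 := by linarith
    _ = (z - diagProj z).2 := h2.symm
    _ ≤ |(z - diagProj z).2| := le_abs_self _
    _ ≤ supNorm2 (z - diagProj z) := le_max_right _ _

lemma ciSup_equiv_real {α β : Sort*} (e : α ≃ β) (g : β → ℝ) :
    ⨆ x, g (e x) = ⨆ y, g y :=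
  congrArg sSup (e.surjective.range_comp g)

lemma nonempty_partialMatching (D D' : Finset (ℝ × ℝ)) : Nonempty (PartialMatching D D') := by
  haveI h1 : IsEmpty {x // x ∈ (∅ : Finset (ℝ × ℝ))} := ⟨fun x => absurd x.2 (Finset.notMem_empty _)⟩
  exact ⟨⟨⟨∅, Finset.empty_subset _⟩, ⟨∅, Finset.empty_subset _⟩,
    Equiv.equivOfIsEmpty _ _⟩⟩

/-- The topologies induced on `PD_n(X)` by `W^p` and `W_d^p` coincide, for
`p ∈ ℝ_{≥1} ∪ {∞}`: for every `D ∈ PD_n(X)` and `ε > 0` there is a `δ > 0` such that the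
`W_d^p`-ball of radius `δ` around `D` is contained in the `W^p`-ball of radius `ε`, and
conversely. -/
theorem wasserstein_diagonal_wasserstein_same_topology (n : ℕ) (hn : 0 < n)
    (X : Set (ℝ × ℝ)) (hX : X ⊆ {x : ℝ × ℝ | x.1 < x.2}) :
    (∀ p : ℝ, 1 ≤ p →
      ∀ D : Finset (ℝ × ℝ), ↑D ⊆ X → D.card = n → ∀ ε : ℝ, 0 < ε →
        (∃ δ : ℝ, 0 < δ ∧ ∀ D' : Finset (ℝ × ℝ), ↑D' ⊆ X → D'.card = n →
          WdP p D D' < δ → Wp p D D' < ε) ∧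
        (∃ δ : ℝ, 0 < δ ∧ ∀ D' : Finset (ℝ × ℝ), ↑D' ⊆ X → D'.card = n →
          Wp p D D' < δ → WdP p D D' < ε)) ∧
    (∀ D : Finset (ℝ × ℝ), ↑D ⊆ X → D.card = n → ∀ ε : ℝ, 0 < ε →
      (∃ δ : ℝ, 0 < δ ∧ ∀ D' : Finset (ℝ × ℝ), ↑D' ⊆ X → D'.card = n →
        WdInf D D' < δ → Winf D D' < ε) ∧
      (∃ δ : ℝ, 0 < δ ∧ ∀ D' : Finset (ℝ × ℝ), ↑D' ⊆ X → D'.card = n →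
        Winf D D' < δ → WdInf D D' < ε)) := by
  constructor
  · -- finite p case
    intro p hp D hD hcard ε hε
    have hp0 : (0:ℝ) < p := lt_of_lt_of_le one_pos hp
    have hDne : D.Nonempty := Finset.card_pos.mp (hcard ▸ hn)
    set η : ℝ := D.inf' hDne (fun z => supNorm2 (z - diagProj z)) with hηdef
    have hη : 0 < η := by
      rw [hηdef, Finset.lt_inf'_iff]
      exact fun z hz => supNorm2_diag_pos (hX (hD hz))
    constructor
    · -- WdP small ⇒ Wp small
      refine ⟨min ε η, lt_min hε hη, fun D' hD' hcard' hlt => ?_⟩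
      haveI : Nonempty (PartialMatching D D') := nonempty_partialMatching D D'
      obtain ⟨m, hm⟩ := exists_lt_of_ciInf_lt hlt
      set S1 : ℝ := ∑ x : {x // x ∈ m.1.1}, supNorm2 ((x : ℝ × ℝ) - ((m.2.2 x : ℝ × ℝ))) ^ p
        with hS1def
      set S2 : ℝ := ∑ x ∈ D \ m.1.1, supNorm2 (x - diagProj x) ^ p with hS2def
      set S3 : ℝ := ∑ y ∈ D' \ m.2.1.1, supNorm2 (y - diagProj y) ^ p with hS3def
      have hS1 : 0 ≤ S1 :=
        Finset.sum_nonneg fun x _ => Real.rpow_nonneg (supNorm2_nonneg _) _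
      have hS2 : 0 ≤ S2 :=
        Finset.sum_nonneg fun x _ => Real.rpow_nonneg (supNorm2_nonneg _) _
      have hS3 : 0 ≤ S3 :=
        Finset.sum_nonneg fun x _ => Real.rpow_nonneg (supNorm2_nonneg _) _
      have hS : 0 ≤ S1 + S2 + S3 := by linarith
      have hSlt : S1 + S2 + S3 < (min ε η) ^ p := by
        have h1 : ((S1 + S2 + S3) ^ (1/p)) ^ p = S1 + S2 + S3 := by
          rw [← Real.rpow_mul hS, one_div_mul_cancel (ne_of_gt hp0), Real.rpow_one]
        calc S1 + S2 + S3 = ((S1 + S2 + S3) ^ (1/p)) ^ p := h1.symm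
          _ < (min ε η) ^ p :=
            Real.rpow_lt_rpow (Real.rpow_nonneg hS _) hm hp0
      -- the matching must be full
      have hI : m.1.1 = D := by
        by_contra hne
        obtain ⟨z, hzD, hzI⟩ := Finset.exists_of_ssubset (lt_of_le_of_ne m.1.2 hne)
        have hterm : supNorm2 (z - diagProj z) ^ p ≤ S2 := by
          rw [hS2def]
          exact Finset.single_le_sum (f := fun x => supNorm2 (x - diagProj x) ^ p)
            (fun x _ => Real.rpow_nonneg (supNorm2_nonneg _) _)
            (Finset.mem_sdiff.mpr ⟨hzD, hzI⟩)
        have h1 : η ^ p ≤ supNorm2 (z - diagProj z) ^ p :=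
          Real.rpow_le_rpow hη.le (Finset.inf'_le _ hzD) hp0.le
        have h2 : (min ε η) ^ p ≤ η ^ p :=
          Real.rpow_le_rpow (le_of_lt (lt_min hε hη)) (min_le_right _ _) hp0.le
        linarith
      have hcardI : m.1.1.card = m.2.1.1.card := by
        have := Fintype.card_congr m.2.2
        simpa [Fintype.card_coe] using this
      have hI' : m.2.1.1 = D' :=
        Finset.eq_of_subset_of_card_le m.2.1.2
          (le_of_eq (by rw [← hcardI, hI, hcard, hcard']))
      set eqD : {x // x ∈ D} ≃ {x // x ∈ m.1.1} :=
        Equiv.subtypeEquivRight (fun x => by rw [hI]) with heqD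
      set eqD' : {y // y ∈ m.2.1.1} ≃ {y // y ∈ D'} :=
        Equiv.subtypeEquivRight (fun y => by rw [hI']) with heqD'
      set e : {x // x ∈ D} ≃ {y // y ∈ D'} := eqD.trans (m.2.2.trans eqD') with he
      have hbdd : BddBelow (Set.range fun e : {x // x ∈ D} ≃ {y // y ∈ D'} =>
          (∑ x : {x // x ∈ D}, supNorm2 ((x : ℝ × ℝ) - ((e x : ℝ × ℝ))) ^ p) ^ (1/p)) := by
        refine ⟨0, ?_⟩
        rintro _ ⟨e', rfl⟩
        exact Real.rpow_nonneg
          (Finset.sum_nonneg fun x _ => Real.rpow_nonneg (supNorm2_nonneg _) _) _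
      have hsum : (∑ x : {x // x ∈ D}, supNorm2 ((x : ℝ × ℝ) - ((e x : ℝ × ℝ))) ^ p) = S1 :=
        Fintype.sum_equiv eqD _ _ (fun x => rfl)
      calc Wp p D D'
          ≤ (∑ x : {x // x ∈ D}, supNorm2 ((x : ℝ × ℝ) - ((e x : ℝ × ℝ))) ^ p) ^ (1/p) :=
            ciInf_le hbdd e
        _ = S1 ^ (1/p) := by rw [hsum]
        _ ≤ (S1 + S2 + S3) ^ (1/p) :=
            Real.rpow_le_rpow hS1 (by linarith) (by positivity)
        _ < min ε η := hm
        _ ≤ ε := min_le_left _ _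
    · -- Wp small ⇒ WdP small : WdP ≤ Wp
      refine ⟨ε, hε, fun D' hD' hcard' hlt => ?_⟩
      have hle : WdP p D D' ≤ Wp p D D' := by
        haveI : Nonempty ({x // x ∈ D} ≃ {y // y ∈ D'}) :=
          ⟨Fintype.equivOfCardEq (by simp [Fintype.card_coe, hcard, hcard'])⟩
        refine le_ciInf fun e => ?_
        have hbdd : BddBelow (Set.range fun m : PartialMatching D D' =>
            ((∑ x : {x // x ∈ m.1.1}, supNorm2 ((x : ℝ × ℝ) - ((m.2.2 x : ℝ × ℝ))) ^ p) +
             (∑ x ∈ D \ m.1.1, supNorm2 (x - diagProj x) ^ p) +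
             (∑ y ∈ D' \ m.2.1.1, supNorm2 (y - diagProj y) ^ p)) ^ (1/p)) := by
          refine ⟨0, ?_⟩
          rintro _ ⟨m', rfl⟩
          refine Real.rpow_nonneg ?_ _
          have := Finset.sum_nonneg
            (fun x (_ : x ∈ Finset.univ (α := {x // x ∈ m'.1.1})) =>
              Real.rpow_nonneg (supNorm2_nonneg ((x : ℝ × ℝ) - ((m'.2.2 x : ℝ × ℝ)))) p)
          have h2 := Finset.sum_nonneg
            (fun x (_ : x ∈ D \ m'.1.1) => Real.rpow_nonneg (supNorm2_nonneg (x - diagProj x)) p)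
          have h3 := Finset.sum_nonneg
            (fun y (_ : y ∈ D' \ m'.2.1.1) => Real.rpow_nonneg (supNorm2_nonneg (y - diagProj y)) p)
          linarith
        have hle2 := ciInf_le hbdd
          (⟨⟨D, Finset.Subset.refl D⟩, ⟨D', Finset.Subset.refl D'⟩, e⟩ : PartialMatching D D')
        refine hle2.trans (le_of_eq ?_)
        simp [Finset.sdiff_self]
      exact lt_of_le_of_lt hle hlt
  · -- infinity case
    intro D hD hcard ε hε
    have hDne : D.Nonempty := Finset.card_pos.mp (hcard ▸ hn)
    haveI : Nonempty {x // x ∈ D} := ⟨⟨hDne.choose, hDne.choose_spec⟩⟩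
    set η : ℝ := D.inf' hDne (fun z => supNorm2 (z - diagProj z)) with hηdef
    have hη : 0 < η := by
      rw [hηdef, Finset.lt_inf'_iff]
      exact fun z hz => supNorm2_diag_pos (hX (hD hz))
    constructor
    · -- WdInf small ⇒ Winf small
      refine ⟨min ε η, lt_min hε hη, fun D' hD' hcard' hlt => ?_⟩
      haveI : Nonempty (PartialMatching D D') := nonempty_partialMatching D D'
      obtain ⟨m, hm⟩ := exists_lt_of_ciInf_lt hlt
      have hI : m.1.1 = D := by
        by_contra hne
        obtain ⟨z, hzD, hzI⟩ := Finset.exists_of_ssubset (lt_of_le_of_ne m.1.2 hne)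
        have hmem : z ∈ D \ m.1.1 := Finset.mem_sdiff.mpr ⟨hzD, hzI⟩
        have h1 : supNorm2 (z - diagProj z)
            ≤ ⨆ x : {x : ℝ × ℝ // x ∈ D \ m.1.1}, supNorm2 ((x : ℝ × ℝ) - diagProj x) :=
          le_ciSup (f := fun x : {x : ℝ × ℝ // x ∈ D \ m.1.1} => supNorm2 ((x : ℝ × ℝ) - diagProj x))
            (Set.Finite.bddAbove (Set.finite_range _)) ⟨z, hmem⟩
        have h2 : (⨆ x : {x : ℝ × ℝ // x ∈ D \ m.1.1}, supNorm2 ((x : ℝ × ℝ) - diagProj x))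
            ≤ max (⨆ x : {x // x ∈ m.1.1}, supNorm2 ((x : ℝ × ℝ) - ((m.2.2 x : ℝ × ℝ))))
              (max (⨆ x : {x : ℝ × ℝ // x ∈ D \ m.1.1}, supNorm2 ((x : ℝ × ℝ) - diagProj x))
                (⨆ y : {y : ℝ × ℝ // y ∈ D' \ m.2.1.1}, supNorm2 ((y : ℝ × ℝ) - diagProj y))) :=
          (le_max_left _ _).trans (le_max_right _ _)
        have h3 : η ≤ supNorm2 (z - diagProj z) := Finset.inf'_le _ hzD
        have := lt_of_le_of_lt (h3.trans (h1.trans h2)) hm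
        exact absurd this (not_lt.mpr (min_le_right _ _))
      have hcardI : m.1.1.card = m.2.1.1.card := by
        have := Fintype.card_congr m.2.2
        simpa [Fintype.card_coe] using this
      have hI' : m.2.1.1 = D' :=
        Finset.eq_of_subset_of_card_le m.2.1.2
          (le_of_eq (by rw [← hcardI, hI, hcard, hcard']))
      set eqD : {x // x ∈ D} ≃ {x // x ∈ m.1.1} :=
        Equiv.subtypeEquivRight (fun x => by rw [hI]) with heqD
      set eqD' : {y // y ∈ m.2.1.1} ≃ {y // y ∈ D'} :=
        Equiv.subtypeEquivRight (fun y => by rw [hI']) with heqD'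
      set e : {x // x ∈ D} ≃ {y // y ∈ D'} := eqD.trans (m.2.2.trans eqD') with he
      have hbdd : BddBelow (Set.range fun e : {x // x ∈ D} ≃ {y // y ∈ D'} =>
          ⨆ x : {x // x ∈ D}, supNorm2 ((x : ℝ × ℝ) - ((e x : ℝ × ℝ)))) := by
        refine ⟨0, ?_⟩
        rintro _ ⟨e', rfl⟩
        exact Real.iSup_nonneg fun x => supNorm2_nonneg _
      have hsup : (⨆ x : {x // x ∈ D}, supNorm2 ((x : ℝ × ℝ) - ((e x : ℝ × ℝ))))
          = ⨆ x : {x // x ∈ m.1.1}, supNorm2 ((x : ℝ × ℝ) - ((m.2.2 x : ℝ × ℝ))) :=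
        ciSup_equiv_real eqD (fun i => supNorm2 ((i : ℝ × ℝ) - ((eqD' (m.2.2 i) : ℝ × ℝ))))
      calc Winf D D'
          ≤ ⨆ x : {x // x ∈ D}, supNorm2 ((x : ℝ × ℝ) - ((e x : ℝ × ℝ))) := ciInf_le hbdd e
        _ = ⨆ x : {x // x ∈ m.1.1}, supNorm2 ((x : ℝ × ℝ) - ((m.2.2 x : ℝ × ℝ))) := hsup
        _ ≤ _ := le_max_left _ _
        _ < min ε η := hm
        _ ≤ ε := min_le_left _ _
    · -- Winf small ⇒ WdInf small : WdInf ≤ Winf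
      refine ⟨ε, hε, fun D' hD' hcard' hlt => ?_⟩
      have hle : WdInf D D' ≤ Winf D D' := by
        haveI : Nonempty ({x // x ∈ D} ≃ {y // y ∈ D'}) :=
          ⟨Fintype.equivOfCardEq (by simp [Fintype.card_coe, hcard, hcard'])⟩
        refine le_ciInf fun e => ?_
        have hbdd : BddBelow (Set.range fun m : PartialMatching D D' =>
            max (⨆ x : {x // x ∈ m.1.1}, supNorm2 ((x : ℝ × ℝ) - ((m.2.2 x : ℝ × ℝ))))
              (max (⨆ x : {x : ℝ × ℝ // x ∈ D \ m.1.1}, supNorm2 ((x : ℝ × ℝ) - diagProj x))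
                (⨆ y : {y : ℝ × ℝ // y ∈ D' \ m.2.1.1}, supNorm2 ((y : ℝ × ℝ) - diagProj y)))) := by
          refine ⟨0, ?_⟩
          rintro _ ⟨m', rfl⟩
          exact le_trans (Real.iSup_nonneg fun x => supNorm2_nonneg _) (le_max_left _ _)
        have hle2 := ciInf_le hbdd
          (⟨⟨D, Finset.Subset.refl D⟩, ⟨D', Finset.Subset.refl D'⟩, e⟩ : PartialMatching D D')
        refine hle2.trans ?_
        haveI h1 : IsEmpty {x : ℝ × ℝ // x ∈ D \ D} := ⟨fun x => by simpa using x.2⟩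
        haveI h2 : IsEmpty {y : ℝ × ℝ // y ∈ D' \ D'} := ⟨fun y => by simpa using y.2⟩
        have hz1 : (⨆ x : {x : ℝ × ℝ // x ∈ D \ D}, supNorm2 ((x : ℝ × ℝ) - diagProj x)) = 0 := by
          rw [iSup_of_empty', Real.sSup_empty]
        have hz2 : (⨆ y : {y : ℝ × ℝ // y ∈ D' \ D'}, supNorm2 ((y : ℝ × ℝ) - diagProj y)) = 0 := by
          rw [iSup_of_empty', Real.sSup_empty]
        have hnn : 0 ≤ ⨆ x : {x // x ∈ D}, supNorm2 ((x : ℝ × ℝ) - ((e x : ℝ × ℝ))) :=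
          Real.iSup_nonneg fun x => supNorm2_nonneg _
        simp only [hz1, hz2]
        exact max_le le_rfl (by simpa using hnn)
      exact lt_of_le_of_lt hle hlt
end
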